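/- arXiv:1209.1449 — 5 statements merged into one kernel-verified Lean document; each statement's English description precedes it below -/
import Mathlib

section
/- If P_0 < 4π|n| for a nonzero integer n, then there exist positive constants C_1, C_2 (depending only on n, P_0) such that for all admissible u with beam power P(u) = P_0, the functional I(u) = (1/2)∫_0^R { r u_r^2 + (n^2/r) u^2 − r V u^2 − (r/2) u^4 } dr satisfies I(u) ≥ C_1 ∫_0^R r u_r^2 dr + C_2 ∫_0^R u^2/r dr − P_0 V_0/(4π), where V_0 = max_{[0,R]} |V|. In particular I is bounded below and coercive on the constraint set. -/
open MeasureTheory Set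

/-- Admissibility: absolutely continuous with derivative `u'`, zero boundary values,
finite energy. -/
def Admissible (R : ℝ) (u u' : ℝ → ℝ) : Prop :=
  (∀ x ∈ Icc (0:ℝ) R, HasDerivAt u (u' x) x) ∧ u 0 = 0 ∧ u R = 0 ∧
    IntegrableOn (fun r => r * u' r ^ 2) (Ioo 0 R) ∧
    IntegrableOn (fun r => u r ^ 2 / r) (Ioo 0 R) ∧
    IntegrableOn (fun r => r * u r ^ 4) (Ioo 0 R)

/-- The action functional `I`. -/
noncomputable def actionI (R : ℝ) (n : ℤ) (V : ℝ → ℝ) (u u' : ℝ → ℝ) : ℝ :=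
  (1/2) * ∫ r in Ioo (0:ℝ) R,
    (r * u' r ^ 2 + ((n:ℝ)^2 / r) * u r ^ 2 - r * V r * u r ^ 2 - r / 2 * u r ^ 4)

/-- The beam power `P`. -/
noncomputable def power (R : ℝ) (u : ℝ → ℝ) : ℝ :=
  2 * Real.pi * ∫ r in Ioo (0:ℝ) R, r * u r ^ 2

/-!
Write `S = ∫ r u_r² + n² ∫ u²/r`. Since `u(R) = 0`, `u(r)² = -∫_r^R 2 u u_s ds`, and the weighted
AM–GM inequality `2 |n| |u u_s| ≤ s u_s² + n² u²/s` gives `|n| sup u² ≤ S`. So the quartic term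
costs at most `sup u² · P₀/(8π) ≤ S P₀/(8π|n|)` and the potential term at most `P₀ V₀/(4π)`,
whence `I(u) ≥ ½ (1 - P₀/(4π|n|)) S - P₀ V₀/(4π)`, and `P₀ < 4π|n|` makes the coefficient positive.
-/

lemma setIntegral_mul_le_const_mul {α : Type*} [MeasurableSpace α] {μ : Measure α} {s : Set α}
    {f g : α → ℝ} {M : ℝ} (hs : MeasurableSet s) (hfg : IntegrableOn (fun x => f x * g x) s μ)
    (hg : IntegrableOn g s μ) (hf : ∀ x ∈ s, f x ≤ M) (hg0 : ∀ x ∈ s, 0 ≤ g x) :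
    ∫ x in s, f x * g x ∂μ ≤ M * ∫ x in s, g x ∂μ := by
  rw [← integral_const_mul]
  exact setIntegral_mono_on hfg (hg.const_mul M) hs
    fun x hx => mul_le_mul_of_nonneg_right (hf x hx) (hg0 x hx)

lemma mul_abs_two_mul_mul_le {c x : ℝ} (p q : ℝ) (hx : 0 < x) :
    c * |2 * p * q| ≤ x * q ^ 2 + c ^ 2 * (p ^ 2 / x) := by
  have hsq : 0 ≤ (x * |q| - c * |p|) ^ 2 / x := by positivity
  have hexp : (x * |q| - c * |p|) ^ 2 / x = x * q ^ 2 + c ^ 2 * (p ^ 2 / x) - c * |2 * p * q| := by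
    rw [abs_mul, abs_mul, abs_two]
    field_simp
    rw [← sq_abs p, ← sq_abs q]
    ring
  linarith

namespace Admissible

variable {R : ℝ} {u u' : ℝ → ℝ}

lemma continuousOn (hu : Admissible R u u') : ContinuousOn u (Icc 0 R) := fun x hx =>
  (hu.1 x hx).continuousAt.continuousWithinAt

lemma integrableOn_two_mul_mul_deriv (hu : Admissible R u u') :
    IntegrableOn (fun x => 2 * u x * u' x) (Ioo 0 R) := by
  have hu'_meas : AEStronglyMeasurable u' (volume.restrict (Ioo 0 R)) :=
    (measurable_deriv u).aestronglyMeasurable.congr <|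
      (ae_restrict_mem measurableSet_Ioo).mono fun x hx => (hu.1 x (Ioo_subset_Icc_self hx)).deriv
  have hu_meas : AEStronglyMeasurable u (volume.restrict (Ioo 0 R)) :=
    (hu.continuousOn.mono Ioo_subset_Icc_self).aestronglyMeasurable measurableSet_Ioo
  refine Integrable.mono' (hu.2.2.2.1.add hu.2.2.2.2.1) ((hu_meas.const_mul 2).mul hu'_meas) ?_
  refine (ae_restrict_mem measurableSet_Ioo).mono fun x hx => ?_
  simpa using mul_abs_two_mul_mul_le (c := 1) (u x) (u' x) hx.1

/-- `u r ^ 2 = -∫_r^R (u ^ 2)'`, since `u R = 0`. -/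
lemma sq_le_integral_abs_two_mul_mul_deriv (hu : Admissible R u u') {r : ℝ} (hr : r ∈ Ioo 0 R) :
    u r ^ 2 ≤ ∫ x in Ioo 0 R, |2 * u x * u' x| := by
  have hint := hu.integrableOn_two_mul_mul_deriv
  have hsub : Ioo r R ⊆ Ioo 0 R := Ioo_subset_Ioo_left hr.1.le
  have hderiv : ∀ x ∈ uIcc r R, HasDerivAt (fun y => u y ^ 2) (2 * u x * u' x) x := by
    intro x hx
    rw [uIcc_of_le hr.2.le] at hx
    refine ((hu.1 x ⟨hr.1.le.trans hx.1, hx.2⟩).fun_pow 2).congr_deriv ?_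
    push_cast
    ring
  have hintI : IntervalIntegrable (fun x => 2 * u x * u' x) volume r R := by
    rw [intervalIntegrable_iff_integrableOn_Ioo_of_le hr.2.le]
    exact hint.mono_set hsub
  have hftc := intervalIntegral.integral_eq_sub_of_hasDerivAt hderiv hintI
  rw [intervalIntegral.integral_of_le hr.2.le, integral_Ioc_eq_integral_Ioo, hu.2.2.1] at hftc
  calc u r ^ 2 = ∫ x in Ioo r R, -(2 * u x * u' x) := by
        rw [integral_neg, hftc]; ring
    _ ≤ ∫ x in Ioo r R, |2 * u x * u' x| :=
        setIntegral_mono_on (hint.mono_set hsub).neg (hint.mono_set hsub).abs measurableSet_Ioo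
          fun x _ => neg_le_abs _
    _ ≤ ∫ x in Ioo 0 R, |2 * u x * u' x| :=
        setIntegral_mono_set hint.abs (Filter.Eventually.of_forall fun x => abs_nonneg _)
          hsub.eventuallyLE

lemma mul_sq_le (hu : Admissible R u u') {c r : ℝ} (hc : 0 ≤ c) (hr : r ∈ Ioo 0 R) :
    c * u r ^ 2 ≤
      (∫ x in Ioo 0 R, x * u' x ^ 2) + c ^ 2 * ∫ x in Ioo 0 R, u x ^ 2 / x := by
  have hA := hu.2.2.2.1
  have hB := hu.2.2.2.2.1
  calc c * u r ^ 2 ≤ ∫ x in Ioo 0 R, c * |2 * u x * u' x| := by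
        rw [integral_const_mul]
        exact mul_le_mul_of_nonneg_left (hu.sq_le_integral_abs_two_mul_mul_deriv hr) hc
    _ ≤ ∫ x in Ioo 0 R, (x * u' x ^ 2 + c ^ 2 * (u x ^ 2 / x)) :=
        setIntegral_mono_on (hu.integrableOn_two_mul_mul_deriv.abs.const_mul c)
          (hA.add (hB.const_mul _)) measurableSet_Ioo
          fun x hx => mul_abs_two_mul_mul_le (u x) (u' x) hx.1
    _ = _ := by rw [integral_add hA (hB.const_mul _), integral_const_mul]

lemma integrableOn_mul_mul_sq (hu : Admissible R u u') {f : ℝ → ℝ}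
    (hf : ContinuousOn f (Icc 0 R)) : IntegrableOn (fun x => f x * (x * u x ^ 2)) (Ioo 0 R) :=
  ((hf.mul (continuousOn_id.mul (hu.continuousOn.pow 2))).integrableOn_Icc).mono_set
    Ioo_subset_Icc_self

lemma integrableOn_mul_sq (hu : Admissible R u u') :
    IntegrableOn (fun x => x * u x ^ 2) (Ioo 0 R) := by
  simpa using hu.integrableOn_mul_mul_sq (f := fun _ => 1) continuousOn_const

lemma actionI_eq (hu : Admissible R u u') (n : ℤ) {V : ℝ → ℝ} (hV : ContinuousOn V (Icc 0 R)) :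
    actionI R n V u u' = (1 / 2) * ((∫ x in Ioo 0 R, x * u' x ^ 2)
      + (n : ℝ) ^ 2 * (∫ x in Ioo 0 R, u x ^ 2 / x)
      - (∫ x in Ioo 0 R, V x * (x * u x ^ 2))
      - ∫ x in Ioo 0 R, u x ^ 2 / 2 * (x * u x ^ 2)) := by
  have hA := hu.2.2.2.1
  have hB := hu.2.2.2.2.1.const_mul ((n : ℝ) ^ 2)
  have hAB : IntegrableOn (fun x => x * u' x ^ 2 + (n : ℝ) ^ 2 * (u x ^ 2 / x)) (Ioo 0 R) :=
    hA.add hB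
  have hpot := hu.integrableOn_mul_mul_sq hV
  have hAB_pot : IntegrableOn
      (fun x => x * u' x ^ 2 + (n : ℝ) ^ 2 * (u x ^ 2 / x) - V x * (x * u x ^ 2)) (Ioo 0 R) :=
    hAB.sub hpot
  have hquart := hu.integrableOn_mul_mul_sq (f := fun x => u x ^ 2 / 2)
    ((hu.continuousOn.pow 2).div_const 2)
  rw [actionI, ← integral_const_mul ((n : ℝ) ^ 2), ← integral_add hA hB,
    ← integral_sub hAB hpot, ← integral_sub hAB_pot hquart]
  congr 2 with x
  ring

lemma integral_potential_le (hu : Admissible R u u') {V : ℝ → ℝ} {V0 : ℝ}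
    (hV : ContinuousOn V (Icc 0 R)) (hV0 : ∀ x ∈ Icc 0 R, V x ≤ V0) :
    ∫ x in Ioo 0 R, V x * (x * u x ^ 2) ≤ V0 * ∫ x in Ioo 0 R, x * u x ^ 2 :=
  setIntegral_mul_le_const_mul measurableSet_Ioo (hu.integrableOn_mul_mul_sq hV)
    hu.integrableOn_mul_sq (fun x hx => hV0 x (Ioo_subset_Icc_self hx))
    fun _ hx => mul_nonneg hx.1.le (sq_nonneg _)

lemma integral_quartic_le (hu : Admissible R u u') {c : ℝ} (hc : 0 < c) :
    ∫ x in Ioo 0 R, u x ^ 2 / 2 * (x * u x ^ 2) ≤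
      ((∫ x in Ioo 0 R, x * u' x ^ 2) + c ^ 2 * ∫ x in Ioo 0 R, u x ^ 2 / x) / (2 * c) *
        ∫ x in Ioo 0 R, x * u x ^ 2 := by
  refine setIntegral_mul_le_const_mul measurableSet_Ioo
    (hu.integrableOn_mul_mul_sq (f := fun x => u x ^ 2 / 2) ((hu.continuousOn.pow 2).div_const 2))
    hu.integrableOn_mul_sq (fun x hx => ?_) fun _ hx => mul_nonneg hx.1.le (sq_nonneg _)
  rw [le_div_iff₀ (by positivity)]
  linarith [hu.mul_sq_le hc.le hx]

end Admissible

theorem stmt2_general (R : ℝ) (n : ℤ) (hn : n ≠ 0)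
    (V : ℝ → ℝ) (hV : ContinuousOn V (Icc 0 R)) (V0 : ℝ)
    (hV0 : IsGreatest ((fun r => |V r|) '' Icc (0:ℝ) R) V0)
    (P0 : ℝ) (hP0n : P0 < 4 * Real.pi * |(n:ℝ)|) :
    ∃ C1 > (0:ℝ), ∃ C2 > (0:ℝ), ∀ u u' : ℝ → ℝ, Admissible R u u' →
      power R u = P0 →
      actionI R n V u u' ≥
        C1 * (∫ r in Ioo (0:ℝ) R, r * u' r ^ 2) +
        C2 * (∫ r in Ioo (0:ℝ) R, u r ^ 2 / r) - P0 * V0 / (4 * Real.pi) := by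
  have hn' : 0 < |(n : ℝ)| := abs_pos.2 (Int.cast_ne_zero.2 hn)
  set κ := (1 - P0 / (4 * Real.pi * |(n : ℝ)|)) / 2
  have hκ : 0 < κ := half_pos (sub_pos.2 ((div_lt_one (by positivity)).2 hP0n))
  refine ⟨κ, hκ, (n : ℝ) ^ 2 * κ, by positivity, fun u u' hu hpow => ?_⟩
  have hmass : ∫ x in Ioo 0 R, x * u x ^ 2 = P0 / (2 * Real.pi) := by
    rw [← hpow, power]
    field_simp
  have hpot := hu.integral_potential_le hV fun x hx =>
    (le_abs_self _).trans (hV0.2 ⟨x, hx, rfl⟩)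
  have hquart := hu.integral_quartic_le hn'
  rw [sq_abs, hmass] at hquart
  rw [hmass] at hpot
  rw [hu.actionI_eq n hV, ge_iff_le]
  set A := ∫ x in Ioo 0 R, x * u' x ^ 2
  set B := ∫ x in Ioo 0 R, u x ^ 2 / x
  calc _ = (1 / 2) * (A + (n : ℝ) ^ 2 * B - V0 * (P0 / (2 * Real.pi))
        - (A + (n : ℝ) ^ 2 * B) / (2 * |(n : ℝ)|) * (P0 / (2 * Real.pi))) := by
        simp only [κ]
        field_simp
        ring
    _ ≤ _ := by linarith

/-- coercive lower bound for `I` under the constraint `P(u) = P₀ < 4π|n|`. -/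
theorem stmt2 (R : ℝ) (hR : 0 < R) (n : ℤ) (hn : n ≠ 0)
    (V : ℝ → ℝ) (hV : ContinuousOn V (Icc 0 R)) (V0 : ℝ)
    (hV0 : IsGreatest ((fun r => |V r|) '' Icc (0:ℝ) R) V0)
    (P0 : ℝ) (hP0 : 0 < P0) (hP0n : P0 < 4 * Real.pi * |(n:ℝ)|) :
    ∃ C1 > (0:ℝ), ∃ C2 > (0:ℝ), ∀ u u' : ℝ → ℝ, Admissible R u u' →
      power R u = P0 →
      actionI R n V u u' ≥
        C1 * (∫ r in Ioo (0:ℝ) R, r * u' r ^ 2) +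
        C2 * (∫ r in Ioo (0:ℝ) R, u r ^ 2 / r) - P0 * V0 / (4 * Real.pi) :=
  stmt2_general R n hn V hV V0 hV0 P0 hP0n
end

section
/- Suppose u is a positive finite-energy solution on (0,R) of (r u_r)_r − (n^2/r) u + r(V + u^2) u = β r u with u(0)=u(R)=0 and P(u) = P_0 > 0. If n^2 > P_0^2/(4π^2) + max_{r∈[0,R]} r^2 V^+(r), then β < 0. -/
/-!
Multiply the equation by `u` and integrate: since `r u'` is bounded and `u` vanishes at both
ends, the boundary term `r u' u` drops out and
`β P = ∫ r V u² + ∫ r u⁴ - ∫ r u'² - n² ∫ u²/r`, where `P = ∫ r u² = P₀ / 2π`.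
Writing `u(x)² = ∫₀ˣ 2 u u'` and using `2|u u'| ≤ P u²/r + r u'²/P` gives
`sup u² ≤ P ∫ u²/r + (∫ r u'²)/P`, hence `∫ r u⁴ ≤ P² ∫ u²/r + ∫ r u'²`.
The gradient terms cancel, and what is left is `β P ≤ ∫ (r² V + P² - n²) u²/r < 0`.
-/

open MeasureTheory Set Filter Topology

theorem exists_abs_le_of_hasDerivAt_of_abs_le {g g' : ℝ → ℝ} {a b K : ℝ} (hab : a < b)
    (hg : ∀ x ∈ Ioo a b, HasDerivAt g (g' x) x) (hK : ∀ x ∈ Ioo a b, |g' x| ≤ K) :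
    ∃ M, ∀ x ∈ Ioo a b, |g x| ≤ M := by
  obtain ⟨c, hc⟩ := nonempty_Ioo.2 hab
  refine ⟨|g c| + K * (b - a), fun x hx => ?_⟩
  have hgxc : |g x - g c| ≤ K * |x - c| :=
    Convex.norm_image_sub_le_of_norm_hasDerivWithin_le (fun y hy => (hg y hy).hasDerivWithinAt)
      hK (convex_Ioo a b) hc hx
  have hxc : |x - c| ≤ b - a :=
    abs_sub_le_iff.2 ⟨by linarith [hx.2, hc.1], by linarith [hx.1, hc.2]⟩
  have hK0 : 0 ≤ K := (abs_nonneg _).trans (hK c hc)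
  linarith [abs_sub_abs_le_abs_sub (g x) (g c), mul_le_mul_of_nonneg_left hxc hK0]

theorem ContinuousOn.dslope_of_differentiableAt {𝕜 E : Type*} [NontriviallyNormedField 𝕜]
    [NormedAddCommGroup E] [NormedSpace 𝕜 E] {f : 𝕜 → E} {a : 𝕜} {s : Set 𝕜}
    (hf : ContinuousOn f s) (hd : DifferentiableAt 𝕜 f a) : ContinuousOn (dslope f a) s := by
  intro x hx
  rcases eq_or_ne x a with rfl | hxa
  · exact (continuousAt_dslope_same.2 hd).continuousWithinAt
  · exact (continuousWithinAt_dslope_of_ne hxa).2 (hf x hx)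

theorem abs_two_mul_mul_le {a b r t : ℝ} (hr : 0 < r) (ht : 0 < t) :
    |2 * a * b| ≤ t * (a ^ 2 / r) + r * b ^ 2 / t := by
  have key : 2 * |a| * |b| * (r * t) ≤ t ^ 2 * a ^ 2 + r ^ 2 * b ^ 2 := by
    nlinarith [sq_nonneg (t * |a| - r * |b|), sq_abs a, sq_abs b]
  rw [abs_mul, abs_mul, abs_two,
    show t * (a ^ 2 / r) + r * b ^ 2 / t = (t ^ 2 * a ^ 2 + r ^ 2 * b ^ 2) / (r * t) by
      field_simp,
    le_div_iff₀ (mul_pos hr ht)]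
  exact key

theorem setIntegral_Ioo_pos {f : ℝ → ℝ} {a b : ℝ} (hab : a < b) (hf : IntegrableOn f (Ioo a b))
    (hpos : ∀ x ∈ Ioo a b, 0 < f x) : 0 < ∫ x in Ioo a b, f x := by
  rw [← integral_Ioc_eq_integral_Ioo, ← intervalIntegral.integral_of_le hab.le]
  exact intervalIntegral.intervalIntegral_pos_of_pos_on
    ((intervalIntegrable_iff_integrableOn_Ioo_of_le hab.le).2 hf) hpos hab

theorem IntegrableOn.of_abs_le {f g : ℝ → ℝ} {s : Set ℝ} (hs : MeasurableSet s)
    (hg : IntegrableOn g s) (hf : ContinuousOn f s) (hfg : ∀ x ∈ s, |f x| ≤ g x) :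
    IntegrableOn f s :=
  hg.mono' (hf.aestronglyMeasurable hs) ((ae_restrict_iff' hs).2 (Eventually.of_forall hfg))

theorem setIntegral_eq_zero_of_hasDerivAt_mul {f g G : ℝ → ℝ} {a b M : ℝ} (hab : a < b)
    (hf : ContinuousOn f (Icc a b)) (hfa : f a = 0) (hfb : f b = 0)
    (hg : ∀ x ∈ Ioo a b, |g x| ≤ M)
    (hG : ∀ x ∈ Ioo a b, HasDerivAt (fun x => g x * f x) (G x) x)
    (hGi : IntegrableOn G (Ioo a b)) :
    ∫ x in Ioo a b, G x = 0 := by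
  have hfa' : Tendsto f (𝓝[>] a) (𝓝 0) :=
    hfa ▸ (hf a (left_mem_Icc.2 hab.le)).mono_of_mem_nhdsWithin (Icc_mem_nhdsGT hab)
  have hfb' : Tendsto f (𝓝[<] b) (𝓝 0) :=
    hfb ▸ (hf b (right_mem_Icc.2 hab.le)).mono_of_mem_nhdsWithin (Icc_mem_nhdsLT hab)
  have hga : IsBoundedUnder (· ≤ ·) (𝓝[>] a) (fun x => |g x|) :=
    isBoundedUnder_of_eventually_le (eventually_of_mem (Ioo_mem_nhdsGT hab) hg)
  have hgb : IsBoundedUnder (· ≤ ·) (𝓝[<] b) (fun x => |g x|) :=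
    isBoundedUnder_of_eventually_le (eventually_of_mem (Ioo_mem_nhdsLT hab) hg)
  have hFTC := intervalIntegral.integral_eq_sub_of_hasDerivAt_of_tendsto hab hG
    ((intervalIntegrable_iff_integrableOn_Ioo_of_le hab.le).2 hGi)
    (by simpa [mul_comm] using hfa'.zero_mul_isBoundedUnder_le hga)
    (by simpa [mul_comm] using hfb'.zero_mul_isBoundedUnder_le hgb)
  rwa [intervalIntegral.integral_of_le hab.le, integral_Ioc_eq_integral_Ioo, sub_zero] at hFTC

theorem sq_le_setIntegral_of_hasDerivAt {u u' : ℝ → ℝ} {R t x : ℝ} (ht : 0 < t)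
    (hu : ∀ x ∈ Icc 0 R, HasDerivAt u (u' x) x) (hu0 : u 0 = 0)
    (hu'i : IntegrableOn (fun r => r * u' r ^ 2) (Ioo 0 R))
    (hui : IntegrableOn (fun r => u r ^ 2 / r) (Ioo 0 R)) (hx : x ∈ Icc 0 R) :
    u x ^ 2 ≤ ∫ r in Ioo 0 R, (t * (u r ^ 2 / r) + r * u' r ^ 2 / t) := by
  set φ : ℝ → ℝ := fun r => t * (u r ^ 2 / r) + r * u' r ^ 2 / t
  have hφi : IntegrableOn φ (Ioo 0 R) := (hui.const_mul t).add (hu'i.div_const t)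
  have hsub : Icc 0 x ⊆ Icc 0 R := Icc_subset_Icc_right hx.2
  have hbound : ∀ r ∈ Ioo 0 x, |2 * u r * u' r| ≤ φ r := fun r hr => abs_two_mul_mul_le hr.1 ht
  have hu_meas : AEStronglyMeasurable u (volume.restrict (Ioo 0 x)) :=
    ((HasDerivAt.continuousOn hu).mono (Ioo_subset_Icc_self.trans hsub)).aestronglyMeasurable
      measurableSet_Ioo
  have hu'_meas : AEStronglyMeasurable u' (volume.restrict (Ioo 0 x)) :=
    (aestronglyMeasurable_deriv u _).congr <| (ae_restrict_iff' measurableSet_Ioo).2 <|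
      Eventually.of_forall fun r hr => (hu r (hsub (Ioo_subset_Icc_self hr))).deriv
  have huu' : IntegrableOn (fun r => 2 * u r * u' r) (Ioo 0 x) :=
    (hφi.mono_set (Ioo_subset_Ioo_right hx.2)).mono' ((hu_meas.const_mul 2).mul hu'_meas)
      ((ae_restrict_iff' measurableSet_Ioo).2 (Eventually.of_forall hbound))
  have hFTC : ∫ r in (0)..x, 2 * u r * u' r = u x ^ 2 := by
    rw [intervalIntegral.integral_eq_sub_of_hasDerivAt (f := fun r => u r ^ 2) (fun r hr => ?_)
      ((intervalIntegrable_iff_integrableOn_Ioo_of_le hx.1).2 huu'), hu0]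
    · ring
    · rw [uIcc_of_le hx.1] at hr
      simpa using (hu r (hsub hr)).fun_pow 2
  rw [← hFTC, intervalIntegral.integral_of_le hx.1, integral_Ioc_eq_integral_Ioo]
  calc ∫ r in Ioo 0 x, 2 * u r * u' r ≤ ∫ r in Ioo 0 x, φ r :=
        setIntegral_mono_on huu' (hφi.mono_set (Ioo_subset_Ioo_right hx.2)) measurableSet_Ioo
          fun r hr => (le_abs_self _).trans (hbound r hr)
    _ ≤ ∫ r in Ioo 0 R, φ r :=
        setIntegral_mono_set hφi ((ae_restrict_iff' measurableSet_Ioo).2 (Eventually.of_forall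
          fun r hr => by have := hr.1; positivity)) (Ioo_subset_Ioo_right hx.2).eventuallyLE

theorem setIntegral_mul_pow_four_le {u u' : ℝ → ℝ} {R : ℝ}
    (hu : ∀ x ∈ Icc 0 R, HasDerivAt u (u' x) x) (hu0 : u 0 = 0)
    (hu'i : IntegrableOn (fun r => r * u' r ^ 2) (Ioo 0 R))
    (hui : IntegrableOn (fun r => u r ^ 2 / r) (Ioo 0 R))
    (hP : 0 < ∫ r in Ioo 0 R, r * u r ^ 2) :
    ∫ r in Ioo 0 R, r * u r ^ 4 ≤
      (∫ r in Ioo 0 R, r * u r ^ 2) ^ 2 * (∫ r in Ioo 0 R, u r ^ 2 / r) +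
        ∫ r in Ioo 0 R, r * u' r ^ 2 := by
  set P := ∫ r in Ioo 0 R, r * u r ^ 2
  set B := ∫ r in Ioo 0 R, u r ^ 2 / r
  set C := ∫ r in Ioo 0 R, r * u' r ^ 2
  have hsup : ∀ x ∈ Icc 0 R, u x ^ 2 ≤ P * B + C / P := fun x hx => by
    have h := sq_le_setIntegral_of_hasDerivAt hP hu hu0 hu'i hui hx
    rwa [integral_add (hui.const_mul P) (hu'i.div_const P), integral_const_mul,
      integral_div] at h
  have hcont : ContinuousOn u (Icc 0 R) := HasDerivAt.continuousOn hu
  have hP_int : IntegrableOn (fun r => r * u r ^ 2) (Ioo 0 R) :=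
    (by fun_prop : ContinuousOn (fun r => r * u r ^ 2) (Icc 0 R)).integrableOn_Icc.mono_set
      Ioo_subset_Icc_self
  have h4_int : IntegrableOn (fun r => r * u r ^ 4) (Ioo 0 R) :=
    (by fun_prop : ContinuousOn (fun r => r * u r ^ 4) (Icc 0 R)).integrableOn_Icc.mono_set
      Ioo_subset_Icc_self
  calc ∫ r in Ioo 0 R, r * u r ^ 4 ≤ ∫ r in Ioo 0 R, (P * B + C / P) * (r * u r ^ 2) :=
        setIntegral_mono_on h4_int (hP_int.const_mul _) measurableSet_Ioo fun r hr => by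
          have hr0 : 0 ≤ r * u r ^ 2 := by have := hr.1; positivity
          calc r * u r ^ 4 = u r ^ 2 * (r * u r ^ 2) := by ring
            _ ≤ (P * B + C / P) * (r * u r ^ 2) :=
              mul_le_mul_of_nonneg_right (hsup r (Ioo_subset_Icc_self hr)) hr0
    _ = (P * B + C / P) * P := integral_const_mul _ _
    _ = P ^ 2 * B + C := by field_simp

theorem integrableOn_energy_terms {u u' : ℝ → ℝ} {R : ℝ} (hu : ContinuousOn u (Icc 0 R))
    (hu' : ContinuousOn u' (Ioo 0 R))
    (hE : IntegrableOn (fun r => r * u' r ^ 2 + u r ^ 2 / r + r * u r ^ 4) (Ioo 0 R)) :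
    IntegrableOn (fun r => r * u' r ^ 2) (Ioo 0 R) ∧
      IntegrableOn (fun r => u r ^ 2 / r) (Ioo 0 R) := by
  have hnonneg : ∀ r ∈ Ioo 0 R, 0 ≤ r * u' r ^ 2 ∧ 0 ≤ u r ^ 2 / r ∧ 0 ≤ r * u r ^ 4 :=
    fun r hr => by
      have := hr.1
      exact ⟨by positivity, by positivity, by positivity⟩
  constructor
  · refine IntegrableOn.of_abs_le measurableSet_Ioo hE (by fun_prop) fun r hr => ?_
    obtain ⟨h1, h2, h3⟩ := hnonneg r hr
    rw [abs_of_nonneg h1]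
    linarith
  · refine IntegrableOn.of_abs_le measurableSet_Ioo hE
      (((hu.mono Ioo_subset_Icc_self).pow 2).div continuousOn_id fun r hr => hr.1.ne')
      fun r hr => ?_
    obtain ⟨h1, h2, h3⟩ := hnonneg r hr
    rw [abs_of_nonneg h2]
    linarith

section VortexEquation

variable {R m β : ℝ} {V u u' u'' : ℝ → ℝ}

theorem hasDerivAt_mul_deriv_of_ode (hu' : ∀ r ∈ Ioo 0 R, HasDerivAt u' (u'' r) r)
    (hode : ∀ r ∈ Ioo 0 R,
      (r * u'' r + u' r) - (m ^ 2 / r) * u r + r * (V r + u r ^ 2) * u r = β * r * u r)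
    {r : ℝ} (hr : r ∈ Ioo 0 R) :
    HasDerivAt (fun r => r * u' r) ((β * r - r * (V r + u r ^ 2)) * u r + m ^ 2 * (u r / r)) r :=
  ((hasDerivAt_id' r).mul (hu' r hr)).congr_deriv (by linear_combination hode r hr)

theorem exists_abs_mul_deriv_le (hR : 0 < R) (hu : ContinuousOn u (Icc 0 R))
    (hd : DifferentiableAt ℝ u 0) (hu0 : u 0 = 0) (hV : ContinuousOn V (Icc 0 R))
    (hu' : ∀ r ∈ Ioo 0 R, HasDerivAt u' (u'' r) r)
    (hode : ∀ r ∈ Ioo 0 R,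
      (r * u'' r + u' r) - (m ^ 2 / r) * u r + r * (V r + u r ^ 2) * u r = β * r * u r) :
    ∃ M, ∀ r ∈ Ioo 0 R, |r * u' r| ≤ M := by
  have hslope := hu.dslope_of_differentiableAt hd
  obtain ⟨K, hK⟩ := isCompact_Icc.exists_bound_of_continuousOn
    (by fun_prop : ContinuousOn
      (fun r => (β * r - r * (V r + u r ^ 2)) * u r + m ^ 2 * dslope u 0 r) (Icc 0 R))
  refine exists_abs_le_of_hasDerivAt_of_abs_le (K := K) hR
    (fun r hr => hasDerivAt_mul_deriv_of_ode hu' hode hr) fun r hr => ?_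
  have hquot : u r / r = dslope u 0 r := by
    rw [dslope_of_ne _ hr.1.ne', slope_def_field, hu0, sub_zero, sub_zero]
  rw [hquot]
  exact hK r (Ioo_subset_Icc_self hr)

theorem setIntegral_energy_eq_zero (hR : 0 < R)
    (hu : ∀ x ∈ Icc 0 R, HasDerivAt u (u' x) x) (hu0 : u 0 = 0) (huR : u R = 0)
    (hV : ContinuousOn V (Icc 0 R)) (hu' : ∀ r ∈ Ioo 0 R, HasDerivAt u' (u'' r) r)
    (hode : ∀ r ∈ Ioo 0 R,
      (r * u'' r + u' r) - (m ^ 2 / r) * u r + r * (V r + u r ^ 2) * u r = β * r * u r)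
    (hu'i : IntegrableOn (fun r => r * u' r ^ 2) (Ioo 0 R))
    (hui : IntegrableOn (fun r => u r ^ 2 / r) (Ioo 0 R)) :
    (∫ r in Ioo 0 R, r * u' r ^ 2) + β * (∫ r in Ioo 0 R, r * u r ^ 2) +
      m ^ 2 * (∫ r in Ioo 0 R, u r ^ 2 / r) - (∫ r in Ioo 0 R, r * V r * u r ^ 2) -
        ∫ r in Ioo 0 R, r * u r ^ 4 = 0 := by
  have hcont : ContinuousOn u (Icc 0 R) := HasDerivAt.continuousOn hu
  have hint : ∀ {f : ℝ → ℝ}, ContinuousOn f (Icc 0 R) → IntegrableOn f (Ioo 0 R) :=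
    fun hf => hf.integrableOn_Icc.mono_set Ioo_subset_Icc_self
  have hPi : IntegrableOn (fun r => r * u r ^ 2) (Ioo 0 R) := hint (by fun_prop)
  have hWi : IntegrableOn (fun r => r * V r * u r ^ 2) (Ioo 0 R) := hint (by fun_prop)
  have hDi : IntegrableOn (fun r => r * u r ^ 4) (Ioo 0 R) := hint (by fun_prop)
  obtain ⟨M, hM⟩ := exists_abs_mul_deriv_le hR hcont (hu 0 ⟨le_rfl, hR.le⟩).differentiableAt
    hu0 hV hu' hode
  -- the integrand is `((r u') u)'`, rewritten with the equation
  have h := setIntegral_eq_zero_of_hasDerivAt_mul hR hcont hu0 huR hM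
    (G := fun r => r * u' r ^ 2 + β * (r * u r ^ 2) + m ^ 2 * (u r ^ 2 / r)
      - r * V r * u r ^ 2 - r * u r ^ 4)
    (fun r hr => ((hasDerivAt_mul_deriv_of_ode hu' hode hr).mul
      (hu r (Ioo_subset_Icc_self hr))).congr_deriv (by ring))
    ((((hu'i.add (hPi.const_mul β)).add (hui.const_mul _)).sub hWi).sub hDi)
  rwa [integral_sub ?_ hDi, integral_sub ?_ hWi, integral_add ?_ (hui.const_mul _),
    integral_add hu'i (hPi.const_mul β), integral_const_mul, integral_const_mul] at h
  · exact hu'i.add (hPi.const_mul β)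
  · exact (hu'i.add (hPi.const_mul β)).add (hui.const_mul _)
  · exact ((hu'i.add (hPi.const_mul β)).add (hui.const_mul _)).sub hWi

theorem setIntegral_potential_lt (hR : 0 < R) {c : ℝ} (hu : ContinuousOn u (Icc 0 R))
    (hV : ContinuousOn V (Icc 0 R)) (hpos : ∀ r ∈ Ioo 0 R, 0 < u r)
    (hui : IntegrableOn (fun r => u r ^ 2 / r) (Ioo 0 R))
    (hlt : ∀ r ∈ Icc 0 R, c + r ^ 2 * max (V r) 0 < m ^ 2) :
    ∫ r in Ioo 0 R, r * V r * u r ^ 2 < (m ^ 2 - c) * ∫ r in Ioo 0 R, u r ^ 2 / r := by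
  have hWi : IntegrableOn (fun r => r * V r * u r ^ 2) (Ioo 0 R) :=
    (by fun_prop : ContinuousOn (fun r => r * V r * u r ^ 2) (Icc 0 R)).integrableOn_Icc.mono_set
      Ioo_subset_Icc_self
  have h : 0 < ∫ r in Ioo 0 R, ((m ^ 2 - c) * (u r ^ 2 / r) - r * V r * u r ^ 2) := by
    refine setIntegral_Ioo_pos hR ((hui.const_mul _).sub hWi) fun r hr => ?_
    have hr0 := hr.1
    have hur := hpos r hr
    have hV_le : r ^ 2 * V r ≤ r ^ 2 * max (V r) 0 :=
      mul_le_mul_of_nonneg_left (le_max_left _ _) (sq_nonneg r)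
    have hlt_r := hlt r (Ioo_subset_Icc_self hr)
    calc 0 < (u r ^ 2 / r) * (m ^ 2 - c - r ^ 2 * V r) := by
          apply mul_pos (by positivity); linarith
      _ = _ := by field_simp
  rw [integral_sub (hui.const_mul _) hWi, integral_const_mul] at h
  linarith

end VortexEquation

theorem stmt9_general (R : ℝ) (hR : 0 < R) (n : ℤ)
    (V : ℝ → ℝ) (hV : ContinuousOn V (Icc 0 R)) (β : ℝ)
    (P0 : ℝ) (hP0 : 0 < P0)
    (u u' u'' : ℝ → ℝ)
    (hderiv : ∀ x ∈ Icc (0:ℝ) R, HasDerivAt u (u' x) x)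
    (hderiv2 : ∀ r ∈ Ioo (0:ℝ) R, HasDerivAt u' (u'' r) r)
    (hu0 : u 0 = 0) (huR : u R = 0)
    (hpos : ∀ r ∈ Ioo (0:ℝ) R, 0 < u r)
    (hE : IntegrableOn (fun r => r * u' r ^ 2 + u r ^ 2 / r + r * u r ^ 4) (Ioo 0 R))
    (hODE : ∀ r ∈ Ioo (0:ℝ) R,
      (r * u'' r + u' r) - ((n:ℝ)^2 / r) * u r + r * (V r + u r ^ 2) * u r = β * r * u r)
    (hP : 2 * Real.pi * ∫ r in Ioo (0:ℝ) R, r * u r ^ 2 = P0)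
    (hbig : ∀ r ∈ Icc (0:ℝ) R,
      P0 ^ 2 / (4 * Real.pi ^ 2) + r ^ 2 * max (V r) 0 < (n:ℝ)^2) :
    β < 0 := by
  have hu : ContinuousOn u (Icc 0 R) := HasDerivAt.continuousOn hderiv
  obtain ⟨hu'i, hui⟩ := integrableOn_energy_terms hu (HasDerivAt.continuousOn hderiv2) hE
  set P := ∫ r in Ioo 0 R, r * u r ^ 2
  have hPpos : 0 < P := by nlinarith [Real.pi_pos]
  have hPsq : P0 ^ 2 / (4 * Real.pi ^ 2) = P ^ 2 := by
    rw [← hP]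
    field_simp
    ring
  have hidentity := setIntegral_energy_eq_zero hR hderiv hu0 huR hV hderiv2 hODE hu'i hui
  have hquartic := setIntegral_mul_pow_four_le hderiv hu0 hu'i hui hPpos
  have hpotential := setIntegral_potential_lt hR hu hV hpos hui (hPsq ▸ hbig)
  exact neg_of_mul_neg_left (by linarith) hPpos.le

/-- if `n² > P₀²/(4π²) + max_{[0,R]} r² V⁺(r)`, then a positive finite-energy
solution of the `n`-vortex equation with beam power `P₀ > 0` has `β < 0`. -/
theorem stmt9 (R : ℝ) (hR : 0 < R) (n : ℤ) (hn : n ≠ 0)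
    (V : ℝ → ℝ) (hV : ContinuousOn V (Icc 0 R)) (β : ℝ)
    (P0 : ℝ) (hP0 : 0 < P0)
    (u u' u'' : ℝ → ℝ)
    (hderiv : ∀ x ∈ Icc (0:ℝ) R, HasDerivAt u (u' x) x)
    (hderiv2 : ∀ r ∈ Ioo (0:ℝ) R, HasDerivAt u' (u'' r) r)
    (hu0 : u 0 = 0) (huR : u R = 0)
    (hpos : ∀ r ∈ Ioo (0:ℝ) R, 0 < u r)
    (hE : IntegrableOn (fun r => r * u' r ^ 2 + u r ^ 2 / r + r * u r ^ 4) (Ioo 0 R))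
    (hODE : ∀ r ∈ Ioo (0:ℝ) R,
      (r * u'' r + u' r) - ((n:ℝ)^2 / r) * u r + r * (V r + u r ^ 2) * u r = β * r * u r)
    (hP : 2 * Real.pi * ∫ r in Ioo (0:ℝ) R, r * u r ^ 2 = P0)
    (hbig : ∀ r ∈ Icc (0:ℝ) R,
      P0 ^ 2 / (4 * Real.pi ^ 2) + r ^ 2 * max (V r) 0 < (n:ℝ)^2) :
    β < 0 :=
  stmt9_general R hR n V hV β P0 hP0 u u' u'' hderiv hderiv2 hu0 huR hpos hE hODE hP hbig
end

section
/- Any solution u of the multiplied-out integral identity ∫_0^R (r V u^2 + r u^4) dr = ∫_0^R ((n^2/r) u^2 + r u_r^2 + β r u^2) dr with beam power P(u) = P_0 ≤ 1/2 and n^2 > r^2 (V^+(r) − β) for all r ∈ [0,R] must be identically zero. (Here the Gagliardo–Nirenberg inequality ∫_0^R r u^4 dr ≤ 4π ∫_0^R r u^2 dr ∫_0^R r u_r^2 dr is used.) -/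
open MeasureTheory Set

/-- nonexistence of nontrivial small-power solutions. Any `u` satisfying the
integral identity obtained from the `n`-vortex equation, with `P(u) = P₀ ≤ 1/2` and
`n² > r²(V⁺(r) − β)` on `[0,R]`, vanishes identically (using the radial
Gagliardo–Nirenberg inequality). -/
theorem stmt10 (R : ℝ) (hR : 0 < R) (n : ℤ) (hn : n ≠ 0) (β : ℝ)
    (V : ℝ → ℝ) (hV : ContinuousOn V (Icc 0 R))
    (P0 : ℝ) (u u' : ℝ → ℝ)
    (hderiv : ∀ x ∈ Icc (0:ℝ) R, HasDerivAt u (u' x) x)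
    (hu0 : u 0 = 0) (huR : u R = 0)
    (hucont : ContinuousOn u (Icc 0 R))
    (hE1 : IntegrableOn (fun r => r * u' r ^ 2) (Ioo 0 R))
    (hE2 : IntegrableOn (fun r => u r ^ 2 / r) (Ioo 0 R))
    (hE3 : IntegrableOn (fun r => r * u r ^ 4) (Ioo 0 R))
    (hIdentity : ∫ r in Ioo (0:ℝ) R, (r * V r * u r ^ 2 + r * u r ^ 4) =
      ∫ r in Ioo (0:ℝ) R, (((n:ℝ)^2 / r) * u r ^ 2 + r * u' r ^ 2 + β * r * u r ^ 2))
    (hP : 2 * Real.pi * ∫ r in Ioo (0:ℝ) R, r * u r ^ 2 = P0)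
    (hPsmall : P0 ≤ 1/2)
    (hbig : ∀ r ∈ Icc (0:ℝ) R, r ^ 2 * (max (V r) 0 - β) < (n:ℝ)^2)
    (hGN : ∫ r in Ioo (0:ℝ) R, r * u r ^ 4 ≤
      4 * Real.pi * (∫ r in Ioo (0:ℝ) R, r * u r ^ 2) * ∫ r in Ioo (0:ℝ) R, r * u' r ^ 2) :
    ∀ r ∈ Icc (0:ℝ) R, u r = 0 := by
  -- notation
  set I2 := ∫ r in Ioo (0:ℝ) R, r * u r ^ 2 with hI2def
  set I4 := ∫ r in Ioo (0:ℝ) R, r * u r ^ 4 with hI4def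
  set ID := ∫ r in Ioo (0:ℝ) R, r * u' r ^ 2 with hIDdef
  -- basic integrabilities from continuity on the compact interval
  have hVu2cont : ContinuousOn (fun r => r * V r * u r ^ 2) (Icc 0 R) :=
    ((continuousOn_id.mul hV).mul (hucont.pow 2))
  have hru2cont : ContinuousOn (fun r => r * u r ^ 2) (Icc 0 R) :=
    continuousOn_id.mul (hucont.pow 2)
  have hIVu2 : IntegrableOn (fun r => r * V r * u r ^ 2) (Ioo 0 R) :=
    (hVu2cont.integrableOn_Icc).mono_set Ioo_subset_Icc_self
  have hIru2 : IntegrableOn (fun r => r * u r ^ 2) (Ioo 0 R) :=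
    (hru2cont.integrableOn_Icc).mono_set Ioo_subset_Icc_self
  have hIn2 : IntegrableOn (fun r => ((n:ℝ)^2 / r) * u r ^ 2) (Ioo 0 R) := by
    have : (fun r => ((n:ℝ)^2 / r) * u r ^ 2) = fun r => (n:ℝ)^2 * (u r ^ 2 / r) := by
      funext r; ring
    rw [this]
    exact hE2.const_mul _
  have hIbru2 : IntegrableOn (fun r => β * r * u r ^ 2) (Ioo 0 R) := by
    have : (fun r => β * r * u r ^ 2) = fun r => β * (r * u r ^ 2) := by
      funext r; ring
    rw [this]
    exact hIru2.const_mul _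
  -- nonnegativity of I2 and ID
  have hI2nonneg : 0 ≤ I2 := by
    apply setIntegral_nonneg measurableSet_Ioo
    intro r hr
    have : (0:ℝ) ≤ r := le_of_lt hr.1
    positivity
  have hIDnonneg : 0 ≤ ID := by
    apply setIntegral_nonneg measurableSet_Ioo
    intro r hr
    have : (0:ℝ) ≤ r := le_of_lt hr.1
    positivity
  -- I4 ≤ ID
  have hI4leID : I4 ≤ ID := by
    have h2 : 4 * Real.pi * I2 ≤ 1 := by nlinarith [Real.pi_pos]
    nlinarith
  -- split the identity into separate integrals
  have hLHS : ∫ r in Ioo (0:ℝ) R, (r * V r * u r ^ 2 + r * u r ^ 4)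
      = (∫ r in Ioo (0:ℝ) R, r * V r * u r ^ 2) + I4 :=
    integral_add hIVu2 hE3
  have hadd1 : IntegrableOn (fun r => ((n:ℝ)^2 / r) * u r ^ 2 + r * u' r ^ 2) (Ioo 0 R) :=
    hIn2.add hE1
  have hadd2 : IntegrableOn (fun r => ((n:ℝ)^2 / r) * u r ^ 2 + β * r * u r ^ 2) (Ioo 0 R) :=
    hIn2.add hIbru2
  have hRHS : ∫ r in Ioo (0:ℝ) R, (((n:ℝ)^2 / r) * u r ^ 2 + r * u' r ^ 2 + β * r * u r ^ 2)
      = (∫ r in Ioo (0:ℝ) R, ((n:ℝ)^2 / r) * u r ^ 2) + ID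
        + ∫ r in Ioo (0:ℝ) R, β * r * u r ^ 2 := by
    rw [integral_add hadd1 hIbru2, integral_add hIn2 hE1]
  -- the combined integrand G
  set G : ℝ → ℝ := fun r => ((n:ℝ)^2 / r + β * r - r * V r) * u r ^ 2 with hGdef
  have hsub : IntegrableOn
      (fun r => (((n:ℝ)^2 / r) * u r ^ 2 + β * r * u r ^ 2) - r * V r * u r ^ 2) (Ioo 0 R) :=
    hadd2.sub hIVu2
  have hGae' : (fun r => (((n:ℝ)^2 / r) * u r ^ 2 + β * r * u r ^ 2) - r * V r * u r ^ 2)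
      =ᵐ[volume.restrict (Ioo (0:ℝ) R)] G :=
    ae_of_all _ fun r => by simp only [hGdef]; ring
  have hGint : IntegrableOn G (Ioo 0 R) := hsub.congr hGae'
  have hGval : ∫ r in Ioo (0:ℝ) R, G r = I4 - ID := by
    have hc : ∫ r in Ioo (0:ℝ) R, G r = ∫ r in Ioo (0:ℝ) R,
        ((((n:ℝ)^2 / r) * u r ^ 2 + β * r * u r ^ 2) - r * V r * u r ^ 2) :=
      (integral_congr_ae hGae').symm
    rw [hc, integral_sub hadd2 hIVu2, integral_add hIn2 hIbru2]
    have := hIdentity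
    rw [hLHS, hRHS] at this
    linarith
  -- pointwise positivity of the factor on Ioo
  have hfac : ∀ r ∈ Ioo (0:ℝ) R, 0 < (n:ℝ)^2 / r + β * r - r * V r := by
    intro r hr
    have hr0 : 0 < r := hr.1
    have hbig' := hbig r ⟨le_of_lt hr.1, le_of_lt hr.2⟩
    have hVle : V r ≤ max (V r) 0 := le_max_left _ _
    have key : 0 < (n:ℝ)^2 / r + β * r - r * max (V r) 0 := by
      have heq : (n:ℝ)^2 / r + β * r - r * max (V r) 0
          = ((n:ℝ)^2 - r^2 * (max (V r) 0 - β)) / r := by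
        field_simp; ring
      rw [heq]
      exact div_pos (by linarith) hr0
    have : r * V r ≤ r * max (V r) 0 := by nlinarith
    linarith
  -- G is nonneg a.e. on Ioo
  have hGnonneg : 0 ≤ᵐ[volume.restrict (Ioo (0:ℝ) R)] G := by
    rw [Filter.EventuallyLE, ae_restrict_iff' measurableSet_Ioo]
    refine ae_of_all _ fun r hr => ?_
    have := hfac r hr
    simp only [hGdef, Pi.zero_apply]
    positivity
  -- hence ∫ G = 0 and G = 0 a.e.
  have hGzero : ∫ r in Ioo (0:ℝ) R, G r = 0 := by
    have h1 : 0 ≤ ∫ r in Ioo (0:ℝ) R, G r := integral_nonneg_of_ae hGnonneg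
    have h2 : ∫ r in Ioo (0:ℝ) R, G r ≤ 0 := by rw [hGval]; linarith
    linarith
  have hGae : G =ᵐ[volume.restrict (Ioo (0:ℝ) R)] 0 := by
    have := (integral_eq_zero_iff_of_nonneg_ae hGnonneg hGint).mp hGzero
    exact this
  -- hence u = 0 a.e. on Ioo
  have huae : u =ᵐ[volume.restrict (Ioo (0:ℝ) R)] 0 := by
    have hmem : ∀ᵐ r ∂(volume.restrict (Ioo (0:ℝ) R)), r ∈ Ioo (0:ℝ) R :=
      ae_restrict_mem measurableSet_Ioo
    filter_upwards [hGae, hmem] with r hGr hr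
    have hfacr := hfac r hr
    have : ((n:ℝ)^2 / r + β * r - r * V r) * u r ^ 2 = 0 := hGr
    have hu2 : u r ^ 2 = 0 := by
      rcases mul_eq_zero.mp this with h | h
      · exact absurd h (ne_of_gt hfacr)
      · exact h
    have : u r = 0 := by nlinarith [sq_nonneg (u r)]
    simpa using this
  -- continuity turns a.e. vanishing into pointwise vanishing on Ioo
  have hcontIoo : ContinuousOn u (Ioo 0 R) := hucont.mono Ioo_subset_Icc_self
  have hzeroIoo : EqOn u 0 (Ioo 0 R) :=
    Measure.eqOn_Ioo_of_ae_eq volume huae hcontIoo continuousOn_const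
  -- conclude on the closed interval
  intro r hr
  rcases eq_or_lt_of_le hr.1 with h0 | h0
  · rw [← h0]; exact hu0
  rcases eq_or_lt_of_le hr.2 with hRe | hRe
  · rw [hRe]; exact huR
  exact hzeroIoo ⟨h0, hRe⟩
end

section
/- For any u in the weighted Sobolev space H with ‖u‖_H^2 = ∫_0^R (r u_r^2 + u^2/r) dr = K, one has ∫_0^R r u^4 dr ≤ 2 R^2 K^2. -/
open MeasureTheory Set

/-
By the fundamental theorem of calculus and AM-GM, u(x)² = ∫₀ˣ 2uu' ≤ ∫₀ˣ (r u'² + u²/r) ≤ K, so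
u² ≤ K on [0, R]. Hence r u⁴ = r² u² · (u²/r) ≤ R² K · (u²/r), and integrating gives
∫₀ᴿ r u⁴ ≤ R² K ∫₀ᴿ u²/r ≤ R² K².
-/

lemma abs_two_mul_mul_le_mul_sq_add_sq_div {r : ℝ} (hr : 0 < r) (a b : ℝ) :
    |2 * a * b| ≤ r * b ^ 2 + a ^ 2 / r := by
  have hdiv : a ^ 2 / r * r = a ^ 2 := div_mul_cancel₀ _ hr.ne'
  rw [abs_le]
  constructor <;> nlinarith [sq_nonneg (r * b + a), sq_nonneg (r * b - a)]

lemma sq_le_setIntegral_of_abs_deriv_sq_le {u u' g : ℝ → ℝ} {a b : ℝ}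
    (hderiv : ∀ x ∈ Icc a b, HasDerivAt u (u' x) x)
    (ha : u a = 0) (hg : IntegrableOn g (Ioo a b))
    (hdom : ∀ t ∈ Ioo a b, |2 * u t * u' t| ≤ g t) {x : ℝ} (hx : x ∈ Icc a b) :
    u x ^ 2 ≤ ∫ t in Ioo a b, g t := by
  have hsub : Icc a x ⊆ Icc a b := Icc_subset_Icc_right hx.2
  have hFTC : u x ^ 2 - u a ^ 2 ≤ ∫ t in a..x, g t := by
    refine intervalIntegral.sub_le_integral_of_hasDeriv_right_of_le (g' := fun t => 2 * u t * u' t)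
      hx.1 (fun t ht => ((hderiv t (hsub ht)).continuousAt.pow 2).continuousWithinAt)
      (fun t ht => ?_) ?_ (fun t ht => (le_abs_self _).trans (hdom t ⟨ht.1, ht.2.trans_le hx.2⟩))
    · refine ((hderiv t (hsub (Ioo_subset_Icc_self ht))).fun_pow 2).hasDerivWithinAt.congr_deriv ?_
      ring
    · rw [integrableOn_Icc_iff_integrableOn_Ioo]
      exact hg.mono_set (Ioo_subset_Ioo_right hx.2)
  have hmono : ∫ t in a..x, g t ≤ ∫ t in Ioo a b, g t := by
    rw [intervalIntegral.integral_of_le hx.1, ← setIntegral_congr_set Ioo_ae_eq_Ioc]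
    refine setIntegral_mono_set hg ?_ (Ioo_subset_Ioo_right hx.2).eventuallyLE
    filter_upwards [ae_restrict_mem measurableSet_Ioo] with t ht
    exact (abs_nonneg _).trans (hdom t ht)
  rw [ha] at hFTC
  linarith

lemma setIntegral_mul_pow_four_le_s12 {u : ℝ → ℝ} {R M : ℝ}
    (hsup : ∀ r ∈ Ioo 0 R, u r ^ 2 ≤ M) (hint : IntegrableOn (fun r => u r ^ 2 / r) (Ioo 0 R)) :
    ∫ r in Ioo 0 R, r * u r ^ 4 ≤ R ^ 2 * M * ∫ r in Ioo 0 R, u r ^ 2 / r := by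
  rw [← integral_const_mul]
  refine integral_mono_of_nonneg ?_ (hint.const_mul _) ?_ <;>
    filter_upwards [ae_restrict_mem measurableSet_Ioo] with r ⟨hr0, hrR⟩
  · positivity
  · calc r * u r ^ 4 = (r ^ 2 * u r ^ 2) * (u r ^ 2 / r) := by field_simp
      _ ≤ (R ^ 2 * M) * (u r ^ 2 / r) := by
        gcongr
        exact hsup r ⟨hr0, hrR⟩

theorem stmt12_general (R : ℝ) (hR : 0 < R) (K : ℝ) (u u' : ℝ → ℝ)
    (hderiv : ∀ x ∈ Icc (0:ℝ) R, HasDerivAt u (u' x) x)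
    (hu0 : u 0 = 0)
    (hE1 : IntegrableOn (fun r => r * u' r ^ 2) (Ioo 0 R))
    (hE2 : IntegrableOn (fun r => u r ^ 2 / r) (Ioo 0 R))
    (hK : ∫ r in Ioo (0:ℝ) R, (r * u' r ^ 2 + u r ^ 2 / r) = K) :
    ∫ r in Ioo (0:ℝ) R, r * u r ^ 4 ≤ 2 * R ^ 2 * K ^ 2 := by
  have hsup : ∀ x ∈ Icc 0 R, u x ^ 2 ≤ K := fun x hx =>
    hK ▸ sq_le_setIntegral_of_abs_deriv_sq_le hderiv hu0 (hE1.add hE2)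
      (fun t ht => abs_two_mul_mul_le_mul_sq_add_sq_div ht.1 _ _) hx
  have hK0 : 0 ≤ K := (sq_nonneg _).trans (hsup 0 ⟨le_rfl, hR.le⟩)
  have hE2K : ∫ r in Ioo 0 R, u r ^ 2 / r ≤ K := by
    have hE1_nonneg : 0 ≤ ∫ r in Ioo 0 R, r * u' r ^ 2 :=
      setIntegral_nonneg measurableSet_Ioo fun r hr => by have := hr.1; positivity
    rw [← hK, integral_add hE1 hE2]
    linarith
  calc ∫ r in Ioo 0 R, r * u r ^ 4 ≤ R ^ 2 * K * ∫ r in Ioo 0 R, u r ^ 2 / r :=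
        setIntegral_mul_pow_four_le_s12 (fun r hr => hsup r (Ioo_subset_Icc_self hr)) hE2
    _ ≤ R ^ 2 * K * K := by gcongr
    _ ≤ 2 * R ^ 2 * K ^ 2 := by nlinarith [sq_nonneg (R * K)]

/-- if `‖u‖_H² = ∫_0^R (r u'² + u²/r) dr = K` then `∫_0^R r u⁴ ≤ 2 R² K²`. -/
theorem stmt12 (R : ℝ) (hR : 0 < R) (K : ℝ) (u u' : ℝ → ℝ)
    (hderiv : ∀ x ∈ Icc (0:ℝ) R, HasDerivAt u (u' x) x)
    (hu0 : u 0 = 0) (huR : u R = 0)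
    (hE1 : IntegrableOn (fun r => r * u' r ^ 2) (Ioo 0 R))
    (hE2 : IntegrableOn (fun r => u r ^ 2 / r) (Ioo 0 R))
    (hK : ∫ r in Ioo (0:ℝ) R, (r * u' r ^ 2 + u r ^ 2 / r) = K) :
    ∫ r in Ioo (0:ℝ) R, r * u r ^ 4 ≤ 2 * R ^ 2 * K ^ 2 :=
  stmt12_general R hR K u u' hderiv hu0 hE1 hE2 hK
end

section
/- In the defocusing case: any nontrivial finite-energy solution pair (u, β) of (r u_r)_r − (n^2/r) u + r(V − u^2) u = β r u on (0,R) with u(0)=u(R)=0 satisfies β < −((r_0^2 + n^2)/R^2 − V_0^+), where r_0 is the first positive zero of the Bessel function J_0 and V_0^+ = max_{[0,R]} V^+. In particular β → −∞ as |n| → ∞. -/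
open MeasureTheory Set

/-- defocusing case. A nontrivial finite-energy solution pair `(u, β)`
satisfies `β < −((r₀² + n²)/R² − V₀⁺)`, where `r₀` is the first positive zero of the
Bessel function `J₀` (entering through the radial Poincaré inequality) and
`V₀⁺ = max_{[0,R]} V⁺`. -/
theorem stmt17 (R : ℝ) (hR : 0 < R) (n : ℤ) (hn : n ≠ 0)
    (V : ℝ → ℝ) (hV : ContinuousOn V (Icc 0 R)) (β : ℝ) (V0p : ℝ)
    (hV0p : IsGreatest ((fun r => max (V r) 0) '' Icc (0:ℝ) R) V0p)
    (u u' : ℝ → ℝ)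
    (hderiv : ∀ x ∈ Icc (0:ℝ) R, HasDerivAt u (u' x) x)
    (hu0 : u 0 = 0) (huR : u R = 0)
    (hucont : ContinuousOn u (Icc 0 R))
    (hnontrivial : ∃ r ∈ Ioo (0:ℝ) R, u r ≠ 0)
    (hE1 : IntegrableOn (fun r => r * u' r ^ 2) (Ioo 0 R))
    (hE2 : IntegrableOn (fun r => u r ^ 2 / r) (Ioo 0 R))
    (hE3 : IntegrableOn (fun r => r * u r ^ 4) (Ioo 0 R))
    (hIdentity : ∫ r in Ioo (0:ℝ) R, (β - V r) * r * u r ^ 2 =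
      -∫ r in Ioo (0:ℝ) R, (r * u' r ^ 2 + ((n:ℝ)^2 / r) * u r ^ 2 + r * u r ^ 4))
    (r0 : ℝ) (hr0 : 0 < r0)
    (hPoincare : ∫ r in Ioo (0:ℝ) R, r * u r ^ 2 ≤
      (R / r0) ^ 2 * ∫ r in Ioo (0:ℝ) R, r * u' r ^ 2) :
    β < -((r0 ^ 2 + (n:ℝ)^2) / R ^ 2 - V0p) := by
  have hIoo : (Ioo (0:ℝ) R) ⊆ Icc 0 R := Ioo_subset_Icc_self
  have hMcont : ContinuousOn (fun r => r * u r ^ 2) (Icc 0 R) :=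
    continuousOn_id.mul (hucont.pow 2)
  have hM_int : IntegrableOn (fun r => r * u r ^ 2) (Ioo 0 R) :=
    (hMcont.integrableOn_Icc).mono_set hIoo
  have hVu_int : IntegrableOn (fun r => V r * (r * u r ^ 2)) (Ioo 0 R) :=
    ((hV.mul hMcont).integrableOn_Icc).mono_set hIoo
  have hB_int : IntegrableOn (fun r => ((n:ℝ)^2 / r) * u r ^ 2) (Ioo 0 R) := by
    have h := hE2.const_mul ((n:ℝ)^2)
    exact IntegrableOn.congr_fun h (fun x _ => by ring) measurableSet_Ioo
  set A := ∫ r in Ioo (0:ℝ) R, r * u' r ^ 2 with hA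
  set B := ∫ r in Ioo (0:ℝ) R, ((n:ℝ)^2 / r) * u r ^ 2 with hB
  set C := ∫ r in Ioo (0:ℝ) R, r * u r ^ 4 with hC
  set M := ∫ r in Ioo (0:ℝ) R, r * u r ^ 2 with hM
  set Vu := ∫ r in Ioo (0:ℝ) R, V r * (r * u r ^ 2) with hVu
  have hsplitR : ∫ r in Ioo (0:ℝ) R, (r * u' r ^ 2 + ((n:ℝ)^2 / r) * u r ^ 2 + r * u r ^ 4)
      = A + B + C := by
    have hfg : IntegrableOn (fun r => r * u' r ^ 2 + ((n:ℝ)^2 / r) * u r ^ 2) (Ioo 0 R) :=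
      hE1.add hB_int
    rw [integral_add hfg hE3, integral_add hE1 hB_int]
  have hsplitL : ∫ r in Ioo (0:ℝ) R, (β - V r) * r * u r ^ 2 = β * M - Vu := by
    have h : ∀ r : ℝ, (β - V r) * r * u r ^ 2
        = β * (r * u r ^ 2) - V r * (r * u r ^ 2) := fun r => by ring
    simp_rw [h]
    rw [integral_sub ((hM_int.const_mul β)) hVu_int, integral_const_mul]
  have hkey : β * M = Vu - (A + B + C) := by
    have h := hIdentity
    rw [hsplitR, hsplitL] at h
    linarith
  have hMnn : 0 ≤ M := by
    refine setIntegral_nonneg measurableSet_Ioo (fun r hr => ?_)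
    have hrpos : 0 < r := hr.1
    positivity
  have hVle : Vu ≤ V0p * M := by
    have h : Vu ≤ ∫ r in Ioo (0:ℝ) R, V0p * (r * u r ^ 2) := by
      refine setIntegral_mono_on hVu_int (hM_int.const_mul V0p) measurableSet_Ioo ?_
      intro r hr
      have hrpos : 0 < r := hr.1
      have h1 : V r ≤ V0p := le_trans (le_max_left _ _)
        (hV0p.2 ⟨r, hIoo hr, rfl⟩)
      have h2 : (0:ℝ) ≤ r * u r ^ 2 := by positivity
      exact mul_le_mul_of_nonneg_right h1 h2
    rwa [integral_const_mul] at h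
  have hPA : r0 ^ 2 / R ^ 2 * M ≤ A := by
    have hc : (0:ℝ) ≤ r0 ^ 2 / R ^ 2 := by positivity
    calc r0 ^ 2 / R ^ 2 * M ≤ r0 ^ 2 / R ^ 2 * ((R / r0) ^ 2 * A) :=
          mul_le_mul_of_nonneg_left hPoincare hc
      _ = A := by field_simp
  have hBM : (n:ℝ) ^ 2 / R ^ 2 * M ≤ B := by
    have h : (∫ r in Ioo (0:ℝ) R, ((n:ℝ)^2 / R ^ 2) * (r * u r ^ 2)) ≤ B := by
      refine setIntegral_mono_on (hM_int.const_mul _) hB_int measurableSet_Ioo ?_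
      intro r hr
      have hrpos : 0 < r := hr.1
      have hrR : r ≤ R := le_of_lt hr.2
      rw [div_mul_eq_mul_div, div_mul_eq_mul_div, div_le_div_iff₀ (by positivity) hrpos]
      have h1 : r ^ 2 ≤ R ^ 2 := by nlinarith
      have h2 : (0:ℝ) ≤ (n:ℝ) ^ 2 * u r ^ 2 := by positivity
      nlinarith [mul_le_mul_of_nonneg_left h1 h2]
    rwa [integral_const_mul] at h
  have hCpos : 0 < C := by
    obtain ⟨r1, hr1, hur1⟩ := hnontrivial
    have hcont4 : ContinuousOn (fun r => r * u r ^ 4) (Icc 0 R) :=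
      continuousOn_id.mul (hucont.pow 4)
    have hnhds : Icc (0:ℝ) R ∈ nhds r1 :=
      Filter.mem_of_superset (isOpen_Ioo.mem_nhds hr1) hIoo
    have hct : ContinuousAt (fun r => r * u r ^ 4) r1 := hcont4.continuousAt hnhds
    have hr1p : 0 < r1 := hr1.1
    have hpos : 0 < r1 * u r1 ^ 4 := by positivity
    have h1 : ∀ᶠ x in nhds r1, 0 < x * u x ^ 4 := hct (Ioi_mem_nhds hpos)
    have h2 : ∀ᶠ x in nhds r1, x ∈ Ioo (0:ℝ) R := isOpen_Ioo.mem_nhds hr1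
    obtain ⟨ε, hε, hball⟩ := Metric.eventually_nhds_iff_ball.mp (h1.and h2)
    have hnn : 0 ≤ᵐ[volume.restrict (Ioo (0:ℝ) R)] fun r => r * u r ^ 4 := by
      refine (ae_restrict_iff' measurableSet_Ioo).mpr (Filter.Eventually.of_forall ?_)
      intro r hr
      have hrpos : 0 < r := hr.1
      positivity
    rw [hC, setIntegral_pos_iff_support_of_nonneg_ae hnn hE3]
    refine lt_of_lt_of_le (Metric.measure_ball_pos volume r1 hε) (measure_mono ?_)
    intro x hx
    exact ⟨ne_of_gt (hball x hx).1, (hball x hx).2⟩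
  by_contra hcon
  push_neg at hcon
  have hKM : (-((r0 ^ 2 + (n:ℝ)^2) / R ^ 2 - V0p)) * M ≤ β * M :=
    mul_le_mul_of_nonneg_right hcon hMnn
  have hsplit : (r0 ^ 2 + (n:ℝ)^2) / R ^ 2 = r0 ^ 2 / R ^ 2 + (n:ℝ)^2 / R ^ 2 := by
    ring
  nlinarith [hVle, hPA, hBM, hCpos, hkey, hKM]
end
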